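/- Let A be a real m×n matrix and b ∈ ℝ^m. Let x, h ∈ ℝ^n satisfy the normal equations J(x)ᵀ(J(x)h + f(x)) = 0 and 1 − μ(x)² (xᵀh) ≠ 0, and set α = 1/(1 − μ(x)² (xᵀh)). Then η(x + α h)² ≤ η(x)² − ‖J(x)h‖₂². In particular, if J(x)h ≠ 0 then η(x + α h) < η(x). -/

import Mathlib

open Matrix BigOperators

/-- Euclidean norm of a vector in ℝ^k. -/
noncomputable def vnorm {k : ℕ} (v : Fin k → ℝ) : ℝ := Real.sqrt (∑ i, (v i) ^ 2)

/-- μ(x) = (1 + xᵀx)^(−1/2). -/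
noncomputable def mu {n : ℕ} (x : Fin n → ℝ) : ℝ := 1 / Real.sqrt (1 + x ⬝ᵥ x)

/-- f(x) = μ(x)(Ax − b). -/
noncomputable def fTLS {m n : ℕ} (A : Matrix (Fin m) (Fin n) ℝ) (b : Fin m → ℝ)
    (x : Fin n → ℝ) : Fin m → ℝ := mu x • (A.mulVec x - b)

/-- η(x) = ‖f(x)‖₂ = ‖Ax − b‖₂/√(1 + xᵀx). -/
noncomputable def eta {m n : ℕ} (A : Matrix (Fin m) (Fin n) ℝ) (b : Fin m → ℝ)
    (x : Fin n → ℝ) : ℝ := vnorm (fTLS A b x)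

/-- Jacobian J(x) = μ(x) A − μ(x)³ (Ax − b) xᵀ. -/
noncomputable def jac {m n : ℕ} (A : Matrix (Fin m) (Fin n) ℝ) (b : Fin m → ℝ)
    (x : Fin n → ℝ) : Matrix (Fin m) (Fin n) ℝ :=
  mu x • A - (mu x) ^ 3 • Matrix.vecMulVec (A.mulVec x - b) x

/-!
Write `f = f(x)`, `J = J(x)` and `y = x + α h`. The choice of `α` is exactly what makes the new
residual a multiple of the linearised one: `μ(x) (A y - b) = α (f + J h)`. Hence
`η(y)² = α² ‖f + J h‖² / (μ(x)² (1 + ‖y‖²))`, and expanding `‖y‖²` with Cauchy–Schwarz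
`(xᵀh)² ≤ (1 + ‖x‖²) ‖h‖²` gives `α² ≤ μ(x)² (1 + ‖y‖²)`, so `η(y)² ≤ ‖f + J h‖²`. Finally the
normal equations say that `J h` is orthogonal to `f + J h`, so `‖f + J h‖² = ‖f‖² - ‖J h‖²`.
-/

section DotProduct

variable {ι R : Type*} [Fintype ι]

lemma dotProduct_self_nonneg [CommRing R] [LinearOrder R] [IsStrictOrderedRing R]
    (v : ι → R) : 0 ≤ v ⬝ᵥ v :=
  Finset.sum_nonneg fun i _ => mul_self_nonneg (v i)

lemma sq_dotProduct_le [CommRing R] [LinearOrder R] [IsStrictOrderedRing R] (x h : ι → R) :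
    (x ⬝ᵥ h) ^ 2 ≤ (x ⬝ᵥ x) * (h ⬝ᵥ h) := by
  simpa [dotProduct, sq] using Finset.sum_mul_sq_le_sq_mul_sq Finset.univ x h

lemma one_add_dotProduct_self_pos [CommRing R] [LinearOrder R] [IsStrictOrderedRing R]
    (x : ι → R) : 0 < 1 + x ⬝ᵥ x := by
  linarith [dotProduct_self_nonneg x]

lemma sq_mul_one_add_dotProduct_self_le [Field R] [LinearOrder R] [IsStrictOrderedRing R]
    (x h : ι → R) {α : R} (hα : α * (1 + x ⬝ᵥ x - x ⬝ᵥ h) = 1 + x ⬝ᵥ x) :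
    α ^ 2 * (1 + x ⬝ᵥ x) ≤ 1 + (x + α • h) ⬝ᵥ (x + α • h) := by
  set s := 1 + x ⬝ᵥ x
  have hs : 0 < s := one_add_dotProduct_self_pos x
  have hexpand : (x + α • h) ⬝ᵥ (x + α • h)
      = x ⬝ᵥ x + 2 * α * (x ⬝ᵥ h) + α ^ 2 * (h ⬝ᵥ h) := by
    simp only [add_dotProduct, dotProduct_add, smul_dotProduct, dotProduct_smul, smul_eq_mul,
      dotProduct_comm h x]
    ring
  have hgap : s * (1 + (x + α • h) ⬝ᵥ (x + α • h) - α ^ 2 * s)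
      = α ^ 2 * (s * (h ⬝ᵥ h) - (x ⬝ᵥ h) ^ 2) := by
    rw [hexpand]
    linear_combination (-(α * (s + x ⬝ᵥ h) + s)) * hα
  have hCS : (x ⬝ᵥ h) ^ 2 ≤ s * (h ⬝ᵥ h) := by
    nlinarith [sq_dotProduct_le x h, dotProduct_self_nonneg h]
  have hgap_nonneg : 0 ≤ s * (1 + (x + α • h) ⬝ᵥ (x + α • h) - α ^ 2 * s) := by
    rw [hgap]; exact mul_nonneg (sq_nonneg α) (sub_nonneg.mpr hCS)
  linarith [(mul_nonneg_iff_of_pos_left hs).mp hgap_nonneg]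

end DotProduct

lemma dotProduct_self_add_mulVec_of_normal_eq {m n R : Type*} [Fintype m] [Fintype n] [CommRing R]
    (M : Matrix m n R) (f : m → R) (h : n → R) (hnormal : Mᵀ *ᵥ (M *ᵥ h + f) = 0) :
    (f + M *ᵥ h) ⬝ᵥ (f + M *ᵥ h) = f ⬝ᵥ f - (M *ᵥ h) ⬝ᵥ (M *ᵥ h) := by
  have horth : (M *ᵥ h) ⬝ᵥ (M *ᵥ h + f) = 0 := by
    rw [dotProduct_comm, dotProduct_mulVec, ← mulVec_transpose, hnormal, zero_dotProduct]
  rw [dotProduct_add] at horth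
  simp only [add_dotProduct, dotProduct_add, dotProduct_comm f (M *ᵥ h)]
  linear_combination 2 * horth

lemma vnorm_sq {k : ℕ} (v : Fin k → ℝ) : vnorm v ^ 2 = v ⬝ᵥ v := by
  rw [vnorm, Real.sq_sqrt (Finset.sum_nonneg fun i _ => sq_nonneg (v i))]
  simp [dotProduct, sq]

section TLS

variable {m n : ℕ} (A : Matrix (Fin m) (Fin n) ℝ) (b : Fin m → ℝ) (x h : Fin n → ℝ)

lemma mu_sq : mu x ^ 2 = (1 + x ⬝ᵥ x)⁻¹ := by
  rw [mu, div_pow, one_pow, Real.sq_sqrt (one_add_dotProduct_self_pos x).le, one_div]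

lemma eta_sq : eta A b x ^ 2 = (A *ᵥ x - b) ⬝ᵥ (A *ᵥ x - b) / (1 + x ⬝ᵥ x) := by
  rw [eta, vnorm_sq, fTLS, smul_dotProduct, dotProduct_smul, smul_eq_mul, smul_eq_mul,
    ← mul_assoc, ← sq, mu_sq, inv_mul_eq_div]

lemma jac_mulVec :
    jac A b x *ᵥ h = mu x • A *ᵥ h - (mu x ^ 3 * (x ⬝ᵥ h)) • (A *ᵥ x - b) := by
  rw [jac, sub_mulVec, smul_mulVec, smul_mulVec]
  congr 1
  ext i
  simp only [mulVec, vecMulVec_apply, dotProduct, Pi.smul_apply, smul_eq_mul, Pi.sub_apply,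
    Finset.mul_sum, Finset.sum_mul]
  exact Finset.sum_congr rfl fun j _ => by ring

variable {x h} {α : ℝ}

lemma mu_smul_residual_add_smul (hα : α * (1 - mu x ^ 2 * (x ⬝ᵥ h)) = 1) :
    mu x • (A *ᵥ (x + α • h) - b) = α • (fTLS A b x + jac A b x *ᵥ h) := by
  ext i
  simp only [jac_mulVec, fTLS, mulVec_add, mulVec_smul, Pi.smul_apply, Pi.add_apply,
    Pi.sub_apply, smul_eq_mul]
  linear_combination (-(mu x * ((A *ᵥ x) i - b i))) * hα

lemma eta_sq_add_smul_le (hα : α * (1 - mu x ^ 2 * (x ⬝ᵥ h)) = 1) :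
    eta A b (x + α • h) ^ 2
      ≤ (fTLS A b x + jac A b x *ᵥ h) ⬝ᵥ (fTLS A b x + jac A b x *ᵥ h) := by
  set N := (fTLS A b x + jac A b x *ᵥ h) ⬝ᵥ (fTLS A b x + jac A b x *ᵥ h)
  have hs := one_add_dotProduct_self_pos x
  have hresidual : (A *ᵥ (x + α • h) - b) ⬝ᵥ (A *ᵥ (x + α • h) - b)
      = α ^ 2 * (1 + x ⬝ᵥ x) * N := by
    have h0 := congrArg (fun v => v ⬝ᵥ v) (mu_smul_residual_add_smul A b hα)
    simp only [smul_dotProduct, dotProduct_smul, smul_eq_mul, ← mul_assoc, ← sq, mu_sq] at h0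
    field_simp at h0
    linear_combination h0
  have hstep : α * (1 + x ⬝ᵥ x - x ⬝ᵥ h) = 1 + x ⬝ᵥ x := by
    rw [mu_sq] at hα
    field_simp at hα
    linear_combination hα
  rw [eta_sq, hresidual, div_le_iff₀ (one_add_dotProduct_self_pos _), mul_comm N]
  exact mul_le_mul_of_nonneg_right (sq_mul_one_add_dotProduct_self_le x h hstep)
    (dotProduct_self_nonneg _)

end TLS

theorem stmt_8 {m n : ℕ} (A : Matrix (Fin m) (Fin n) ℝ) (b : Fin m → ℝ)
    (x h : Fin n → ℝ)
    (hnormal : (jac A b x)ᵀ.mulVec ((jac A b x).mulVec h + fTLS A b x) = 0)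
    (hne : 1 - (mu x) ^ 2 * (x ⬝ᵥ h) ≠ 0)
    (α : ℝ) (hα : α = 1 / (1 - (mu x) ^ 2 * (x ⬝ᵥ h))) :
    eta A b (x + α • h) ^ 2 ≤ eta A b x ^ 2 - vnorm ((jac A b x).mulVec h) ^ 2 ∧
    ((jac A b x).mulVec h ≠ 0 → eta A b (x + α • h) < eta A b x) := by
  have hα' : α * (1 - mu x ^ 2 * (x ⬝ᵥ h)) = 1 := by rw [hα, one_div, inv_mul_cancel₀ hne]
  have hdecrease : eta A b (x + α • h) ^ 2 ≤ eta A b x ^ 2 - vnorm (jac A b x *ᵥ h) ^ 2 :=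
    calc eta A b (x + α • h) ^ 2
        ≤ (fTLS A b x + jac A b x *ᵥ h) ⬝ᵥ (fTLS A b x + jac A b x *ᵥ h) :=
          eta_sq_add_smul_le A b hα'
      _ = fTLS A b x ⬝ᵥ fTLS A b x - (jac A b x *ᵥ h) ⬝ᵥ (jac A b x *ᵥ h) :=
          dotProduct_self_add_mulVec_of_normal_eq _ _ _ hnormal
      _ = eta A b x ^ 2 - vnorm (jac A b x *ᵥ h) ^ 2 := by rw [eta, vnorm_sq, vnorm_sq]
  refine ⟨hdecrease, fun hJh => ?_⟩
  have hpos : 0 < vnorm (jac A b x *ᵥ h) ^ 2 := by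
    rw [vnorm_sq]
    exact (dotProduct_self_nonneg _).lt_of_ne' (dotProduct_self_eq_zero.not.mpr hJh)
  exact lt_of_pow_lt_pow_left₀ 2 (Real.sqrt_nonneg _) (by linarith)
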